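/- arXiv:1503.05851 — 2 statements merged into one kernel-verified Lean document; each statement's English description precedes it below -/
import Mathlib

section
/- If the random variables split into two nonempty groups that are independent of each other (i.e., I = A ∪ B with A, B nonempty, and the families (y_i)_{i∈A} and (y_i)_{i∈B} independent), then the joint cumulant κ[y_I] = 0. -/
open MeasureTheory Finset

/-- The moment `E[y^A]` of the labeled family `(y i)_{i ∈ A}`. -/
noncomputable def mom {Ω : Type*} [MeasurableSpace Ω] {ι : Type*}
    (μ : Measure Ω) (y : ι → Ω → ℝ) (A : Finset ι) : ℝ :=
  ∫ ω, ∏ i ∈ A, y i ω ∂μ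

open scoped Classical in
/-- Set partitions of a finite (label) set `A`: finsets of nonempty pairwise
disjoint blocks whose union is `A`. -/
noncomputable def partitionsOf {ι : Type*} (A : Finset ι) : Finset (Finset (Finset ι)) :=
  A.powerset.powerset.filter fun π =>
    (∀ B ∈ π, B.Nonempty) ∧ (∀ B ∈ π, ∀ C ∈ π, B ≠ C → Disjoint B C) ∧ π.sup id = A

/-- The joint cumulant `κ[y_A]`, defined by the (Möbius-inverted form of the)
moments-to-cumulants recursion. -/
noncomputable def cum {Ω : Type*} [MeasurableSpace Ω] {ι : Type*}
    (μ : Measure Ω) (y : ι → Ω → ℝ) (A : Finset ι) : ℝ :=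
  ∑ π ∈ partitionsOf A,
    (-1 : ℝ) ^ (π.card - 1) * (Nat.factorial (π.card - 1)) * ∏ B ∈ π, mom μ y B

/-- The Wick polynomial `:y^I:` defined by the recursion
`:y^I: = y^I − Σ_{∅≠E⊆I} E[y^E]·:y^{I∖E}:`, with `:y^∅: = 1`. -/
noncomputable def wick {Ω : Type*} [MeasurableSpace Ω] {ι : Type*} [DecidableEq ι]
    (μ : Measure Ω) (y : ι → Ω → ℝ) (I : Finset ι) : Ω → ℝ :=
  fun ω => (∏ i ∈ I, y i ω) -
    ∑ E ∈ (I.powerset.filter fun E => E ≠ ∅).attach,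
      mom μ y E.1 * wick μ y (I \ E.1) ω
termination_by I.card
decreasing_by
  have h := E.2
  simp only [Finset.mem_filter, Finset.mem_powerset] at h
  exact Finset.card_lt_card (Finset.sdiff_ssubset h.1 (Finset.nonempty_iff_ne_empty.mpr h.2))

/-!
Because `cum` is the Möbius inverse of `mom` on set partitions, it satisfies the recursion
`m S = ∑_{a ∈ T ⊆ S} κ T * m (S \ T)` for any fixed `a ∈ S`: a pair `(T, ρ)` with `T ≠ S` and `ρ`
a partition of `T` is the same as a partition `σ = ρ ∪ {S \ T}` of `S` with a marked block not
containing `a`, so a partition `σ` with `k ≥ 2` blocks collects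
`(-1)^(k-1) (k-1)! + (k-1) (-1)^(k-2) (k-2)! = 0`, and only `σ = {S}` survives.

Independence makes moments factor across the cut: `m C = m (C ∩ A) * m (C \ A)` for
`C ⊆ A ∪ B`. By strong induction, every `κ S` with `S` meeting both sides vanishes: choose
`a ∈ S ∩ A` in the recursion; the proper `T` meeting both sides contribute nothing, and the
`T ⊆ A` sum to `m (S ∩ A) * m (S \ A) = m S`, which leaves `κ S = 0`.
-/

section SetPartitions

variable {ι : Type*} [DecidableEq ι] {S : Finset ι} {π : Finset (Finset ι)}

theorem mem_partitionsOf :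
    π ∈ partitionsOf S ↔ (∀ B ∈ π, B.Nonempty) ∧
      (∀ B ∈ π, ∀ C ∈ π, B ≠ C → Disjoint B C) ∧ π.sup id = S := by
  unfold partitionsOf
  rw [Subsingleton.elim (fun a b : ι => Classical.propDecidable (a = b)) ‹DecidableEq ι›]
  simp only [mem_filter, mem_powerset, and_iff_right_iff_imp]
  rintro ⟨-, -, rfl⟩ B hB
  exact mem_powerset.mpr (le_sup (f := id) hB)

theorem subset_of_mem_partitionsOf (hπ : π ∈ partitionsOf S) {B : Finset ι} (hB : B ∈ π) :
    B ⊆ S :=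
  (mem_partitionsOf.mp hπ).2.2 ▸ le_sup (f := id) hB

theorem singleton_mem_partitionsOf (hS : S.Nonempty) : {S} ∈ partitionsOf S :=
  mem_partitionsOf.mpr ⟨by simpa using hS, by simp, by simp⟩

theorem eq_singleton_of_mem_partitionsOf (hπ : π ∈ partitionsOf S) (hcard : π.card = 1) :
    π = {S} := by
  obtain ⟨B, rfl⟩ := card_eq_one.mp hcard
  simpa using (mem_partitionsOf.mp hπ).2.2

theorem nonempty_of_mem_partitionsOf (hπ : π ∈ partitionsOf S) (hS : S.Nonempty) :
    π.Nonempty := by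
  rw [nonempty_iff_ne_empty]
  rintro rfl
  exact hS.ne_empty (mem_partitionsOf.mp hπ).2.2.symm

theorem card_filter_notMem_partitionsOf (hπ : π ∈ partitionsOf S) {a : ι} (ha : a ∈ S) :
    (π.filter (a ∉ ·)).card = π.card - 1 := by
  obtain ⟨hne, hdisj, hsup⟩ := mem_partitionsOf.mp hπ
  obtain ⟨B, hB, haB⟩ := mem_sup.mp (hsup.symm ▸ ha)
  have hblock : π.filter (a ∈ ·) = {B} := by
    refine eq_singleton_iff_unique_mem.mpr ⟨mem_filter.mpr ⟨hB, haB⟩, fun C hC => ?_⟩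
    obtain ⟨hC, haC⟩ := mem_filter.mp hC
    by_contra hCB
    exact disjoint_left.mp (hdisj C hC B hB hCB) haC haB
  have := card_filter_add_card_filter_not (s := π) (p := (a ∈ ·))
  rw [hblock, card_singleton] at this
  omega

theorem sdiff_notMem_of_mem_partitionsOf {T : Finset ι} (hπ : π ∈ partitionsOf T)
    (hTS : T ≠ S) (hST : T ⊆ S) : S \ T ∉ π := by
  intro h
  obtain ⟨x, hx⟩ := sdiff_nonempty.mpr fun hS => hTS (hST.antisymm hS)
  exact (mem_sdiff.mp hx).2 (subset_of_mem_partitionsOf hπ h hx)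

theorem insert_sdiff_mem_partitionsOf {T : Finset ι} (hπ : π ∈ partitionsOf T)
    (hTS : T ≠ S) (hST : T ⊆ S) : insert (S \ T) π ∈ partitionsOf S := by
  obtain ⟨hne, hdisj, hsup⟩ := mem_partitionsOf.mp hπ
  have hR : (S \ T).Nonempty := sdiff_nonempty.mpr fun hS => hTS (hST.antisymm hS)
  have hRdisj : ∀ D ∈ π, Disjoint (S \ T) D := fun D hD =>
    sdiff_disjoint.mono_right (subset_of_mem_partitionsOf hπ hD)
  refine mem_partitionsOf.mpr ⟨?_, ?_, ?_⟩
  · simpa [hR] using hne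
  · intro B hB C hC hBC
    rcases mem_insert.mp hB with rfl | hBπ <;> rcases mem_insert.mp hC with rfl | hCπ
    exacts [absurd rfl hBC, hRdisj C hCπ, (hRdisj B hBπ).symm, hdisj B hBπ C hCπ hBC]
  · rw [sup_insert, hsup, id, sup_eq_union, sdiff_union_of_subset hST]

theorem erase_mem_partitionsOf (hπ : π ∈ partitionsOf S) {B : Finset ι} (hB : B ∈ π) :
    π.erase B ∈ partitionsOf (S \ B) := by
  obtain ⟨hne, hdisj, hsup⟩ := mem_partitionsOf.mp hπ
  refine mem_partitionsOf.mpr ⟨fun C hC => hne C (mem_of_mem_erase hC),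
    fun C hC D hD => hdisj C (mem_of_mem_erase hC) D (mem_of_mem_erase hD), ?_⟩
  ext x
  simp only [mem_sup, mem_erase, mem_sdiff, id_eq, ← hsup]
  constructor
  · rintro ⟨C, ⟨hCB, hC⟩, hx⟩
    exact ⟨⟨C, hC, hx⟩, disjoint_left.mp (hdisj C hC B hB hCB) hx⟩
  · rintro ⟨⟨C, hC, hx⟩, hxB⟩
    exact ⟨C, ⟨fun hCB => hxB (hCB ▸ hx), hC⟩, hx⟩

end SetPartitions

section MomentCumulant

variable {ι : Type*} [DecidableEq ι]

def cumulantCoeff (k : ℕ) : ℝ := (-1) ^ (k - 1) * (k - 1).factorial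

theorem cumulantCoeff_add_two (n : ℕ) :
    cumulantCoeff (n + 2) + (n + 1) * cumulantCoeff (n + 1) = 0 := by
  rw [cumulantCoeff, cumulantCoeff, show n + 2 - 1 = n + 1 from rfl, Nat.add_sub_cancel,
    Nat.factorial_succ, pow_succ]
  push_cast
  ring

noncomputable def partitionCumulant (m : Finset ι → ℝ) (S : Finset ι) : ℝ :=
  ∑ π ∈ partitionsOf S, cumulantCoeff π.card * ∏ B ∈ π, m B

theorem sum_partitionCumulant_mul_sdiff_erase (m : Finset ι → ℝ) {S : Finset ι} {a : ι}
    (ha : a ∈ S) :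
    ∑ T ∈ (S.powerset.filter (a ∈ ·)).erase S, partitionCumulant m T * m (S \ T) =
      ∑ π ∈ partitionsOf S, ((π.card - 1 : ℕ) : ℝ) * cumulantCoeff (π.card - 1) * ∏ B ∈ π, m B := by
  have hcount : ∀ π ∈ partitionsOf S,
      ((π.card - 1 : ℕ) : ℝ) * cumulantCoeff (π.card - 1) * ∏ B ∈ π, m B =
        ∑ _B ∈ π.filter (a ∉ ·), cumulantCoeff (π.card - 1) * ∏ B ∈ π, m B := by
    intro π hπ
    rw [sum_const, card_filter_notMem_partitionsOf hπ ha, nsmul_eq_mul, mul_assoc]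
  simp only [partitionCumulant, sum_mul]
  rw [sum_congr rfl hcount, sum_sigma', sum_sigma']
  refine sum_nbij' (fun x => ⟨insert (S \ x.1) x.2, S \ x.1⟩)
    (fun x => ⟨S \ x.2, x.1.erase x.2⟩) ?_ ?_ ?_ ?_ ?_
  · rintro ⟨T, ρ⟩ h
    obtain ⟨⟨hTS, hST, haT⟩, hρ⟩ := by
      simpa only [mem_sigma, mem_erase, mem_filter, mem_powerset] using h
    simp only [mem_sigma, mem_filter, mem_sdiff, not_and, not_not]
    exact ⟨insert_sdiff_mem_partitionsOf hρ hTS hST, mem_insert_self _ _, fun _ => haT⟩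
  · rintro ⟨π, B⟩ h
    obtain ⟨hπ, hB, haB⟩ := by simpa only [mem_sigma, mem_filter] using h
    have hBS := subset_of_mem_partitionsOf hπ hB
    obtain ⟨b, hb⟩ := (mem_partitionsOf.mp hπ).1 B hB
    simp only [mem_sigma, mem_erase, mem_filter, mem_powerset, mem_sdiff]
    have hBS' : S \ B ≠ S := fun h => (mem_sdiff.mp (h.symm ▸ hBS hb)).2 hb
    exact ⟨⟨hBS', sdiff_subset, ha, haB⟩, erase_mem_partitionsOf hπ hB⟩
  · rintro ⟨T, ρ⟩ h
    obtain ⟨⟨hTS, hST, -⟩, hρ⟩ := by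
      simpa only [mem_sigma, mem_erase, mem_filter, mem_powerset] using h
    simp only [Finset.sdiff_sdiff_eq_self hST,
      erase_insert (sdiff_notMem_of_mem_partitionsOf hρ hTS hST)]
  · rintro ⟨π, B⟩ h
    obtain ⟨hπ, hB, -⟩ := by simpa only [mem_sigma, mem_filter] using h
    simp only [Finset.sdiff_sdiff_eq_self (subset_of_mem_partitionsOf hπ hB), insert_erase hB]
  · rintro ⟨T, ρ⟩ h
    obtain ⟨⟨hTS, hST, -⟩, hρ⟩ := by
      simpa only [mem_sigma, mem_erase, mem_filter, mem_powerset] using h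
    have hnot := sdiff_notMem_of_mem_partitionsOf hρ hTS hST
    simp only [card_insert_of_notMem hnot, prod_insert hnot, Nat.add_sub_cancel]
    ring

theorem sum_partitionCumulant_mul_sdiff (m : Finset ι → ℝ) (hm : m ∅ = 1) {S : Finset ι}
    {a : ι} (ha : a ∈ S) :
    ∑ T ∈ S.powerset.filter (a ∈ ·), partitionCumulant m T * m (S \ T) = m S := by
  have hS : S ∈ S.powerset.filter (a ∈ ·) := mem_filter.mpr ⟨mem_powerset_self S, ha⟩
  rw [← add_sum_erase _ _ hS, sum_partitionCumulant_mul_sdiff_erase m ha, Finset.sdiff_self, hm,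
    mul_one, partitionCumulant, ← sum_add_distrib,
    sum_eq_single_of_mem {S} (singleton_mem_partitionsOf ⟨a, ha⟩)]
  · simp [cumulantCoeff]
  intro π hπ hπS
  have hcard_ne_zero : π.card ≠ 0 :=
    card_ne_zero.mpr (nonempty_of_mem_partitionsOf hπ ⟨a, ha⟩)
  have hcard_ne_one : π.card ≠ 1 := fun h => hπS (eq_singleton_of_mem_partitionsOf hπ h)
  obtain ⟨n, hn⟩ : ∃ n, π.card = n + 2 := ⟨π.card - 2, by omega⟩
  rw [hn, show n + 2 - 1 = n + 1 from rfl]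
  push_cast
  linear_combination (∏ B ∈ π, m B) * cumulantCoeff_add_two n

theorem partitionCumulant_eq_zero_of_mul_split (m : Finset ι → ℝ) (hm : m ∅ = 1)
    {A S : Finset ι} (hsplit : ∀ C ⊆ S, m C = m (C ∩ A) * m (C \ A))
    (hSA : (S ∩ A).Nonempty) (hSA' : (S \ A).Nonempty) : partitionCumulant m S = 0 := by
  induction S using Finset.strongInduction with
  | H S ih =>
  obtain ⟨a, haSA⟩ := hSA
  obtain ⟨haS, haA⟩ := mem_inter.mp haSA
  have hrec := sum_partitionCumulant_mul_sdiff m hm haS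
  rw [← sum_filter_add_sum_filter_not _ (· ⊆ A)] at hrec
  have hpure : ∑ T ∈ (S.powerset.filter (a ∈ ·)).filter (· ⊆ A),
      partitionCumulant m T * m (S \ T) = m S := by
    have hindex : (S.powerset.filter (a ∈ ·)).filter (· ⊆ A) =
        (S ∩ A).powerset.filter (a ∈ ·) := by
      ext T
      simp only [mem_filter, mem_powerset, subset_inter_iff]
      tauto
    rw [hindex, hsplit S subset_rfl, ← sum_partitionCumulant_mul_sdiff m hm haSA, sum_mul]
    refine sum_congr rfl fun T hT => ?_
    have hTA : T ⊆ A := (mem_powerset.mp (mem_filter.mp hT).1).trans inter_subset_right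
    have hinter : (S \ T) ∩ A = (S ∩ A) \ T := by
      ext x
      simp only [mem_inter, mem_sdiff]
      tauto
    have hsdiff : (S \ T) \ A = S \ A := by
      ext x
      simp only [mem_sdiff]
      exact ⟨fun h => ⟨h.1.1, h.2⟩, fun h => ⟨⟨h.1, fun hxT => h.2 (hTA hxT)⟩, h.2⟩⟩
    rw [hsplit _ sdiff_subset, hinter, hsdiff, mul_assoc]
  have hmixed : ∑ T ∈ (S.powerset.filter (a ∈ ·)).filter (¬ · ⊆ A),
      partitionCumulant m T * m (S \ T) = partitionCumulant m S := by
    have hS : S ∈ (S.powerset.filter (a ∈ ·)).filter (¬ · ⊆ A) := by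
      simpa [haS] using sdiff_nonempty.mp hSA'
    rw [sum_eq_single_of_mem S hS, Finset.sdiff_self, hm, mul_one]
    intro T hT hTS
    obtain ⟨⟨hTS', haT⟩, hTA⟩ := by simpa only [mem_filter, mem_powerset] using hT
    rw [ih T (hTS'.ssubset_of_ne hTS) (fun C hC => hsplit C (hC.trans hTS'))
      ⟨a, mem_inter.mpr ⟨haT, haA⟩⟩ (sdiff_nonempty.mpr hTA), zero_mul]
  linarith

end MomentCumulant

theorem mom_empty {Ω : Type*} [MeasurableSpace Ω] {ι : Type*} (μ : Measure Ω)
    [IsProbabilityMeasure μ] (y : ι → Ω → ℝ) : mom μ y ∅ = 1 := by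
  simp [mom]

theorem cum_eq_partitionCumulant {Ω : Type*} [MeasurableSpace Ω] {ι : Type*} (μ : Measure Ω)
    (y : ι → Ω → ℝ) (S : Finset ι) : cum μ y S = partitionCumulant (mom μ y) S :=
  rfl

theorem mom_union_eq_mul_of_indepFun {Ω : Type*} [MeasurableSpace Ω] {ι : Type*} [DecidableEq ι]
    (μ : Measure Ω) (y : ι → Ω → ℝ) {A B C D : Finset ι} (hmeas : ∀ i, Measurable (y i))
    (hindep : ProbabilityTheory.IndepFun
      (fun ω (i : A) => y i.1 ω) (fun ω (i : B) => y i.1 ω) μ)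
    (hCA : C ⊆ A) (hDB : D ⊆ B) (hCD : Disjoint C D) :
    mom μ y (C ∪ D) = mom μ y C * mom μ y D := by
  have hprod_comp : ∀ {E F : Finset ι}, F ⊆ E → (fun ω => ∏ i ∈ F, y i ω) =
      (fun v : E → ℝ => ∏ i ∈ F.subtype (· ∈ E), v i) ∘ fun ω (i : E) => y i.1 ω := by
    intro E F hFE
    funext ω
    exact (prod_subtype_of_mem (y · ω) hFE).symm
  have hprod_meas : ∀ E F : Finset ι,
      Measurable fun v : E → ℝ => ∏ i ∈ F.subtype (· ∈ E), v i :=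
    fun _ F => Finset.measurable_prod _ fun i _ => measurable_pi_apply i
  have hindep' : ProbabilityTheory.IndepFun
      (fun ω => ∏ i ∈ C, y i ω) (fun ω => ∏ i ∈ D, y i ω) μ := by
    rw [hprod_comp hCA, hprod_comp hDB]
    exact hindep.comp (hprod_meas A C) (hprod_meas B D)
  simp only [mom, prod_union hCD]
  exact hindep'.integral_fun_mul_eq_mul_integral
    (Finset.measurable_prod C fun i _ => hmeas i).aestronglyMeasurable
    (Finset.measurable_prod D fun i _ => hmeas i).aestronglyMeasurable

theorem cumulant_vanishes_of_indep_general {Ω : Type*} [MeasurableSpace Ω] {ι : Type*} [DecidableEq ι]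
    (μ : Measure Ω) [IsProbabilityMeasure μ] (y : ι → Ω → ℝ)
    (A B : Finset ι) (hA : A.Nonempty) (hB : B.Nonempty) (hAB : Disjoint A B)
    (hmeas : ∀ i, Measurable (y i))
    (hindep : ProbabilityTheory.IndepFun
      (fun ω (i : A) => y i.1 ω) (fun ω (i : B) => y i.1 ω) μ) :
    cum μ y (A ∪ B) = 0 := by
  have hsplit : ∀ C ⊆ A ∪ B, mom μ y C = mom μ y (C ∩ A) * mom μ y (C \ A) := fun C hC => by
    rw [← mom_union_eq_mul_of_indepFun μ y hmeas hindep inter_subset_right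
      (sdiff_le_iff.mpr hC) (disjoint_sdiff.mono_left inter_subset_right),
      union_comm, sdiff_union_inter]
  rw [cum_eq_partitionCumulant]
  refine partitionCumulant_eq_zero_of_mul_split (mom μ y) (mom_empty μ y) hsplit ?_ ?_
  · rwa [union_inter_cancel_left]
  · rwa [union_sdiff_left, hAB.symm.sdiff_eq_left]

/-- if the index set splits into two nonempty independent groups,
the joint cumulant vanishes. -/
theorem cumulant_vanishes_of_indep {Ω : Type*} [MeasurableSpace Ω] {ι : Type*} [DecidableEq ι]
    (μ : Measure Ω) [IsProbabilityMeasure μ] (y : ι → Ω → ℝ)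
    (A B : Finset ι) (hA : A.Nonempty) (hB : B.Nonempty) (hAB : Disjoint A B)
    (hmeas : ∀ i, Measurable (y i))
    (hint : ∀ C ⊆ A ∪ B, Integrable (fun ω => ∏ i ∈ C, y i ω) μ)
    (hindep : ProbabilityTheory.IndepFun
      (fun ω (i : A) => y i.1 ω) (fun ω (i : B) => y i.1 ω) μ) :
    cum μ y (A ∪ B) = 0 :=
  cumulant_vanishes_of_indep_general μ y A B hA hB hAB hmeas hindep
end

section
/- Algebraic derivative property: for a nonempty sequence I and any index j, the formal derivative ∂_{y_j} :y^I: = Σ_{k=1}^{|I|} 1(i_k = j) · :y^{I with the k-th entry removed}:, where :y^I: is viewed as a polynomial in the commuting indeterminates (y_j) with coefficients built from the moments. -/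
/-!
Strong induction on `A`. The Leibniz rule differentiates the leading monomial into
`Σ_k 1(f k = j) ∏_{A∖k} X`, and the induction hypothesis differentiates each correction term
`E[y^E]·:y^{A∖E}:` into `Σ_{k ∈ A∖E} 1(f k = j) E[y^E]·:y^{(A∖E)∖k}:`. Exchanging the sums over
`E` and `k`, and using `(A∖E)∖k = (A∖k)∖E`, the coefficient of `1(f k = j)` is exactly the
defining recursion of `:y^{A∖k}:`.
-/

open MeasureTheory Finset

/-- The moment `E[∏_{l∈A} y_{f(l)}]` of a labeled family of random variables. -/
noncomputable def momL {Ω : Type*} [MeasurableSpace Ω] {ι L : Type*}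
    (μ : Measure Ω) (y : ι → Ω → ℝ) (f : L → ι) (A : Finset L) : ℝ :=
  ∫ ω, ∏ l ∈ A, y (f l) ω ∂μ

/-- The Wick polynomial `:y^A:` as a formal polynomial in the commuting
indeterminates `(X i)`, with coefficients built from the moments:
`:y^A: = ∏_{l∈A} X_{f(l)} − Σ_{∅≠E⊆A} E[y^E]·:y^{A∖E}:`. -/
noncomputable def wickPoly {Ω : Type*} [MeasurableSpace Ω] {ι L : Type*} [DecidableEq L]
    (μ : Measure Ω) (y : ι → Ω → ℝ) (f : L → ι) (A : Finset L) : MvPolynomial ι ℝ :=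
  (∏ l ∈ A, MvPolynomial.X (f l)) -
    ∑ E ∈ (A.powerset.filter fun E => E ≠ ∅).attach,
      MvPolynomial.C (momL μ y f E.1) * wickPoly μ y f (A \ E.1)
termination_by A.card
decreasing_by
  have h := E.2
  simp only [Finset.mem_filter, Finset.mem_powerset] at h
  exact Finset.card_lt_card (Finset.sdiff_ssubset h.1 (Finset.nonempty_iff_ne_empty.mpr h.2))

theorem Derivation.leibniz_prod {R A M : Type*} [CommSemiring R] [CommSemiring A]
    [AddCommMonoid M] [Algebra R A] [Module A M] [Module R M] (D : Derivation R A M)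
    {L : Type*} [DecidableEq L] (s : Finset L) (g : L → A) :
    D (∏ l ∈ s, g l) = ∑ k ∈ s, (∏ l ∈ s.erase k, g l) • D (g k) := by
  induction s using Finset.induction_on with
  | empty => simp
  | insert a s ha ih =>
    rw [prod_insert ha, D.leibniz, ih, sum_insert ha, erase_insert ha, smul_sum, add_comm]
    congr 1
    refine sum_congr rfl fun k hk => ?_
    rw [erase_insert_of_ne (ne_of_mem_of_not_mem hk ha).symm,
      prod_insert fun h => ha (mem_of_mem_erase h), mul_smul]

theorem MvPolynomial.pderiv_prod_X {R ι L : Type*} [CommSemiring R] [DecidableEq ι]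
    [DecidableEq L] (f : L → ι) (j : ι) (s : Finset L) :
    pderiv j (∏ l ∈ s, (X (f l) : MvPolynomial ι R))
      = ∑ k ∈ s, if f k = j then ∏ l ∈ s.erase k, X (f l) else 0 := by
  rw [Derivation.leibniz_prod]
  refine sum_congr rfl fun k _ => ?_
  by_cases h : f k = j
  · simp [h]
  · simp [h, pderiv_X_of_ne h]

theorem Finset.sum_filter_powerset_sum_sdiff {L M : Type*} [DecidableEq L] [AddCommMonoid M]
    (s : Finset L) (p : Finset L → Prop) [DecidablePred p] (g : Finset L → L → M) :
    ∑ E ∈ s.powerset.filter p, ∑ k ∈ s \ E, g E k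
      = ∑ k ∈ s, ∑ E ∈ (s.erase k).powerset.filter p, g E k :=
  sum_comm' fun E k => by
    simp only [mem_filter, mem_powerset, mem_sdiff, subset_erase]
    tauto

section Wick

variable {Ω : Type*} [MeasurableSpace Ω] {ι L : Type*} [DecidableEq L]
  (μ : Measure Ω) (y : ι → Ω → ℝ) (f : L → ι)

theorem wickPoly_eq_prod_sub_sum (A : Finset L) :
    wickPoly μ y f A = (∏ l ∈ A, MvPolynomial.X (f l)) -
      ∑ E ∈ A.powerset.filter (· ≠ ∅),
        MvPolynomial.C (momL μ y f E) * wickPoly μ y f (A \ E) := by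
  rw [wickPoly, sum_attach _ fun E => MvPolynomial.C (momL μ y f E) * wickPoly μ y f (A \ E)]

theorem pderiv_wickPoly [DecidableEq ι] (j : ι) (A : Finset L) :
    MvPolynomial.pderiv j (wickPoly μ y f A)
      = ∑ k ∈ A, if f k = j then wickPoly μ y f (A.erase k) else 0 := by
  induction A using Finset.strongInduction with
  | H A ih =>
  have pderiv_correction : ∀ E ∈ A.powerset.filter (· ≠ ∅),
      MvPolynomial.pderiv j (MvPolynomial.C (momL μ y f E) * wickPoly μ y f (A \ E))
        = ∑ k ∈ A \ E, if f k = j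
            then MvPolynomial.C (momL μ y f E) * wickPoly μ y f ((A \ E).erase k) else 0 := by
    intro E hE
    rw [mem_filter, mem_powerset, ← nonempty_iff_ne_empty] at hE
    rw [MvPolynomial.pderiv_C_mul, ih _ (sdiff_ssubset hE.1 hE.2), mul_sum]
    simp only [mul_ite, mul_zero]
  rw [wickPoly_eq_prod_sub_sum, map_sub, map_sum, MvPolynomial.pderiv_prod_X,
    sum_congr rfl pderiv_correction, sum_filter_powerset_sum_sdiff, ← sum_sub_distrib]
  refine sum_congr rfl fun k _ => ?_
  by_cases h : f k = j
  · simp only [h, if_true, wickPoly_eq_prod_sub_sum μ y f (A.erase k), erase_sdiff_comm]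
  · simp [h]

end Wick

open scoped Classical in
theorem wick_formal_derivative_general {Ω : Type*} [MeasurableSpace Ω] {ι L : Type*}
    [DecidableEq ι] [DecidableEq L]
    (μ : Measure Ω) (y : ι → Ω → ℝ) (f : L → ι)
    (A : Finset L) (j : ι) :
    MvPolynomial.pderiv j (wickPoly μ y f A)
      = ∑ k ∈ A, if f k = j then wickPoly μ y f (A.erase k) else 0 :=
  pderiv_wickPoly μ y f j A

open scoped Classical in
/-- the formal (algebraic) derivative of a Wick polynomial:
`∂_{y_j} :y^I: = Σ_{k=1}^{|I|} 1(i_k = j) :y^{I∖(k)}:`. -/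
theorem wick_formal_derivative {Ω : Type*} [MeasurableSpace Ω] {ι L : Type*}
    [DecidableEq ι] [DecidableEq L]
    (μ : Measure Ω) [IsProbabilityMeasure μ] (y : ι → Ω → ℝ) (f : L → ι)
    (A : Finset L) (hA : A.Nonempty) (j : ι)
    (hint : ∀ E ⊆ A, Integrable (fun ω => ∏ l ∈ E, y (f l) ω) μ) :
    MvPolynomial.pderiv j (wickPoly μ y f A)
      = ∑ k ∈ A, if f k = j then wickPoly μ y f (A.erase k) else 0 :=
  wick_formal_derivative_general μ y f A j
end
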